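/- Switching by a root preserves hypermetricity on cuts: if b ∈ ℤ^{n+1} with ∑ b_i = 1, A ⊆ {0,...,n} with b(A) = 0, and b^A is defined by (b^A)_i = −b_i for i ∈ A and b_i otherwise, then ∑ (b^A)_i = 1, and for every cut semimetric δ_S one has H(b^A)·δ_S = b^A(S)(1 − b^A(S)) ≤ 0. -/
import Mathlib


/-- Cut semimetric: `(δ_S)_{ij} = 1` iff `|S ∩ {i,j}| = 1`. -/
def cutSemimetric {n : ℕ} (S : Finset (Fin (n+1))) (i j : Fin (n+1)) : ℝ :=
  if (i ∈ S) ≠ (j ∈ S) then 1 else 0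

lemma cutSemimetric_eq {n : ℕ} (S : Finset (Fin (n+1))) (i j : Fin (n+1)) :
    cutSemimetric S i j = (if i ∈ S then (1:ℝ) else 0) + (if j ∈ S then (1:ℝ) else 0)
      - 2 * (if i ∈ S then (1:ℝ) else 0) * (if j ∈ S then (1:ℝ) else 0) := by
  by_cases hi : i ∈ S <;> by_cases hj : j ∈ S <;> simp [cutSemimetric, hi, hj] <;> norm_num

lemma full_double_sum {n : ℕ} (c : Fin (n+1) → ℝ) (S : Finset (Fin (n+1))) :
    ∑ i, ∑ j, c i * c j * cutSemimetric S i j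
      = 2 * (∑ i ∈ S, c i) * ((∑ i, c i) - ∑ i ∈ S, c i) := by
  have hχ : ∀ g : Fin (n+1) → ℝ,
      (∑ i, g i * (if i ∈ S then (1:ℝ) else 0)) = ∑ i ∈ S, g i := by
    intro g
    simp [mul_ite, mul_one, mul_zero, Finset.sum_ite_mem]
  have point : ∀ i j, c i * c j * cutSemimetric S i j
      = (c i * (if i ∈ S then (1:ℝ) else 0)) * c j
        + c i * (c j * (if j ∈ S then (1:ℝ) else 0))
        - (c i * (if i ∈ S then (1:ℝ) else 0)) * (2 * (c j * (if j ∈ S then (1:ℝ) else 0))) := by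
    intro i j
    rw [cutSemimetric_eq]
    ring
  simp only [point, Finset.sum_add_distrib, Finset.sum_sub_distrib]
  rw [← Finset.sum_mul_sum, ← Finset.sum_mul_sum, ← Finset.sum_mul_sum, ← Finset.mul_sum, hχ c]
  ring

lemma half_double_sum {n : ℕ} (c : Fin (n+1) → ℝ) (S : Finset (Fin (n+1))) :
    2 * ∑ i, ∑ j ∈ Finset.univ.filter (fun j => i < j), c i * c j * cutSemimetric S i j
      = ∑ i, ∑ j, c i * c j * cutSemimetric S i j := by
  set f : Fin (n+1) → Fin (n+1) → ℝ := fun i j => c i * c j * cutSemimetric S i j with hf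
  have hδ : ∀ i j, cutSemimetric S i j = cutSemimetric S j i := by
    intro i j
    by_cases hi : i ∈ S <;> by_cases hj : j ∈ S <;> simp [cutSemimetric, hi, hj]
  have hsym : ∀ i j, f i j = f j i := by
    intro i j
    simp only [hf]
    rw [hδ]
    ring
  have hdiag : ∀ i, f i i = 0 := by
    intro i; simp [hf, cutSemimetric]
  have split : ∀ i : Fin (n+1), ∑ j, f i j
      = (∑ j ∈ Finset.univ.filter (fun j => i < j), f i j)
        + ∑ j ∈ Finset.univ.filter (fun j => j < i), f i j := by
    intro i
    rw [← Finset.sum_filter_add_sum_filter_not Finset.univ (fun j => i < j) (f i)]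
    congr 1
    have : Finset.univ.filter (fun j => ¬ i < j)
        = insert i (Finset.univ.filter (fun j => j < i)) := by
      ext j
      simp only [Finset.mem_filter, Finset.mem_univ, true_and, Finset.mem_insert, not_lt,
        le_iff_lt_or_eq]
      tauto
    rw [this, Finset.sum_insert (by simp), hdiag, zero_add]
  have swap : ∑ i, ∑ j ∈ Finset.univ.filter (fun j => j < i), f i j
      = ∑ i, ∑ j ∈ Finset.univ.filter (fun j => i < j), f i j := by
    simp only [Finset.sum_filter]
    rw [Finset.sum_comm]
    apply Finset.sum_congr rfl
    intro i _
    apply Finset.sum_congr rfl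
    intro j _
    rw [hsym]
  calc 2 * ∑ i, ∑ j ∈ Finset.univ.filter (fun j => i < j), f i j
      = (∑ i, ∑ j ∈ Finset.univ.filter (fun j => i < j), f i j)
        + ∑ i, ∑ j ∈ Finset.univ.filter (fun j => j < i), f i j := by rw [swap]; ring
    _ = ∑ i, ∑ j, f i j := by
        rw [← Finset.sum_add_distrib]
        exact Finset.sum_congr rfl fun i _ => (split i).symm

lemma int_mul_one_sub_nonpos (t : ℤ) : (t : ℝ) * (1 - (t : ℝ)) ≤ 0 := by
  rcases le_or_gt t 0 with h | h
  · have h' : (t : ℝ) ≤ 0 := by exact_mod_cast h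
    nlinarith
  · have h' : (1 : ℝ) ≤ (t : ℝ) := by exact_mod_cast h
    nlinarith

/-- Switching by a root: if `b(A) = 0` then `b^A` still sums to `1`, and for
every cut semimetric `δ_S`, `H(b^A)·δ_S = b^A(S)(1 − b^A(S)) ≤ 0`. -/
theorem switching_by_root {n : ℕ} (b : Fin (n+1) → ℤ) (hb : ∑ i, b i = 1)
    (A : Finset (Fin (n+1))) (hA : ∑ i ∈ A, b i = 0) :
    let bA : Fin (n+1) → ℤ := fun i => if i ∈ A then -b i else b i
    (∑ i, bA i = 1) ∧
    (∀ S : Finset (Fin (n+1)),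
      ∑ i, ∑ j ∈ Finset.univ.filter (fun j => i < j),
          (bA i : ℝ) * (bA j : ℝ) * cutSemimetric S i j
        = ((∑ a ∈ S, bA a : ℤ) : ℝ) * (1 - ((∑ a ∈ S, bA a : ℤ) : ℝ)) ∧
      ((∑ a ∈ S, bA a : ℤ) : ℝ) * (1 - ((∑ a ∈ S, bA a : ℤ) : ℝ)) ≤ 0) := by
  intro bA
  have hsum : ∑ i, bA i = 1 := by
    have : ∀ i, bA i = b i - 2 * (if i ∈ A then b i else 0) := by
      intro i; by_cases hi : i ∈ A <;> simp [bA, hi] <;> ring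
    simp only [this, Finset.sum_sub_distrib, ← Finset.mul_sum, Finset.sum_ite_mem,
      Finset.univ_inter, hA, hb]
    ring
  refine ⟨hsum, fun S => ?_⟩
  set c : Fin (n+1) → ℝ := fun i => (bA i : ℝ) with hc
  set t : ℤ := ∑ a ∈ S, bA a with ht
  have htc : ((t : ℤ) : ℝ) = ∑ i ∈ S, c i := by
    simp [ht, hc]
  have hsc : (∑ i, c i) = 1 := by
    have := hsum
    simp only [hc]
    rw [← Int.cast_sum]
    exact_mod_cast congrArg (fun z : ℤ => (z : ℝ)) this
  have hkey : 2 * ∑ i, ∑ j ∈ Finset.univ.filter (fun j => i < j),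
      c i * c j * cutSemimetric S i j
      = 2 * ((t : ℝ) * (1 - (t : ℝ))) := by
    rw [half_double_sum, full_double_sum, hsc, htc]
    ring
  constructor
  · have := hkey
    simp only [hc] at this ⊢
    linarith
  · exact int_mul_one_sub_nonpos t
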